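/- arXiv:1304.4321 — 6 statements merged into one kernel-verified Lean document; each statement's English description precedes it below -/
import Mathlib

section
/- Let h(x) = -x·log₂(x) - (1-x)·log₂(1-x) be the binary entropy function (with h(0)=h(1)=0). Then for all γ with 0 ≤ γ ≤ 1/2, 1 - 4γ² ≤ h(1/2 - γ) ≤ 1 - 2γ². -/
/-!
Put `t = 2γ` and `F t = (1 + t) log (1 + t) + (1 - t) log (1 - t)`, so that
`h (1/2 - γ) = 1 - F t / (2 log 2)`. Combining the logarithmic series of `log (1 - t²)` and
`log (1 + t) - log (1 - t)` gives `F t = ∑_{k ≥ 1} t^(2k) / (k (2k - 1))`, a series in `t²` with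
nonnegative coefficients. Its first term gives `t² ≤ F t`, hence `h ≤ 1 - t² / (2 log 2) ≤ 1 - 2γ²`.
It also shows that `F t / t²` is increasing in `|t|`, so `F t ≤ F 1 · t² = 2 log 2 · t²`, which is
`1 - 4γ² ≤ h`.
-/

noncomputable def binEnt (x : ℝ) : ℝ :=
  -(x * Real.logb 2 x) - (1 - x) * Real.logb 2 (1 - x)

open Real Set

/-- `entropyDeficit t = 2 (log 2 - H ((1 + t) / 2))`, with `H` the binary entropy in nats. -/
noncomputable def entropyDeficit (t : ℝ) : ℝ := (1 + t) * log (1 + t) + (1 - t) * log (1 - t)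

lemma continuous_entropyDeficit : Continuous entropyDeficit := by
  unfold entropyDeficit
  exact (continuous_mul_log.comp (by fun_prop)).add (continuous_mul_log.comp (by fun_prop))

lemma entropyDeficit_one : entropyDeficit 1 = 2 * log 2 := by
  norm_num [entropyDeficit]

lemma hasSum_entropyDeficit {t : ℝ} (ht : |t| < 1) :
    HasSum (fun k : ℕ => (t ^ 2) ^ (k + 1) / ((k + 1) * (2 * k + 1))) (entropyDeficit t) := by
  have hsq : |t ^ 2| < 1 := by
    rw [abs_pow, sq_lt_one_iff₀ (abs_nonneg t)]
    exact ht
  have hlog := hasSum_pow_div_log_of_abs_lt_one hsq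
  have hodd := (hasSum_log_sub_log_of_abs_lt_one ht).mul_left t
  have hvalue : entropyDeficit t = t * (log (1 + t) - log (1 - t)) - -log (1 - t ^ 2) := by
    rw [show 1 - t ^ 2 = (1 + t) * (1 - t) by ring,
      log_mul (by linarith [neg_abs_le t]) (by linarith [le_abs_self t]), entropyDeficit]
    ring
  have hterm : ∀ k : ℕ, t * (2 * (1 / (2 * k + 1)) * t ^ (2 * k + 1)) - (t ^ 2) ^ (k + 1) / (k + 1)
      = (t ^ 2) ^ (k + 1) / ((k + 1) * (2 * k + 1)) := by
    intro k
    field_simp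
    ring
  rw [hvalue]
  simpa only [hterm] using hodd.sub hlog

lemma sq_le_entropyDeficit {t : ℝ} (ht : |t| < 1) : t ^ 2 ≤ entropyDeficit t := by
  have hfirst := le_hasSum (hasSum_entropyDeficit ht) 0 fun k _ => by positivity
  simpa using hfirst

lemma entropyDeficit_mul_sq_le {s t : ℝ} (hts : |t| ≤ |s|) (hs : |s| < 1) :
    entropyDeficit t * s ^ 2 ≤ entropyDeficit s * t ^ 2 := by
  have hsq : t ^ 2 ≤ s ^ 2 := sq_le_sq.2 hts
  refine hasSum_le (fun k => ?_) ((hasSum_entropyDeficit (hts.trans_lt hs)).mul_right _)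
    ((hasSum_entropyDeficit hs).mul_right _)
  rw [div_mul_eq_mul_div, div_mul_eq_mul_div]
  gcongr ?_ / _
  calc (t ^ 2) ^ (k + 1) * s ^ 2 = (t ^ 2) ^ k * (t ^ 2 * s ^ 2) := by ring
    _ ≤ (s ^ 2) ^ k * (t ^ 2 * s ^ 2) := by gcongr
    _ = (s ^ 2) ^ (k + 1) * t ^ 2 := by ring

lemma entropyDeficit_le {t : ℝ} (ht : |t| < 1) : entropyDeficit t ≤ 2 * log 2 * t ^ 2 := by
  have hcomp : ∀ s ∈ Ico |t| 1, entropyDeficit t * s ^ 2 ≤ entropyDeficit s * t ^ 2 := by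
    intro s ⟨hts, hs1⟩
    have hs0 : 0 ≤ s := (abs_nonneg t).trans hts
    rw [← abs_of_nonneg hs0] at hts hs1
    exact entropyDeficit_mul_sq_le hts hs1
  have h1 : (1 : ℝ) ∈ closure (Ico |t| 1) := by
    rw [closure_Ico ht.ne]
    exact ⟨ht.le, le_rfl⟩
  have hle := le_on_closure hcomp (by fun_prop)
    (continuous_entropyDeficit.mul continuous_const).continuousOn h1
  simpa [entropyDeficit_one, mul_comm] using hle

lemma binEnt_eq_binEntropy_div_log_two (x : ℝ) : binEnt x = binEntropy x / log 2 := by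
  rw [binEntropy_eq_negMulLog_add_negMulLog_one_sub]
  simp only [binEnt, negMulLog, logb]
  ring

lemma mul_log_div_two (x : ℝ) : x * log (x / 2) = x * log x - x * log 2 := by
  rcases eq_or_ne x 0 with rfl | hx
  · simp
  · rw [log_div hx two_ne_zero]
    ring

lemma binEntropy_half_sub (γ : ℝ) :
    binEntropy (1 / 2 - γ) = log 2 - entropyDeficit (2 * γ) / 2 := by
  have hl := mul_log_div_two (1 - 2 * γ)
  have hr := mul_log_div_two (1 + 2 * γ)
  rw [show (1 - 2 * γ) / 2 = 1 / 2 - γ by ring] at hl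
  rw [show (1 + 2 * γ) / 2 = 1 - (1 / 2 - γ) by ring] at hr
  rw [binEntropy_eq_negMulLog_add_negMulLog_one_sub, entropyDeficit]
  simp only [negMulLog]
  linear_combination -hl / 2 - hr / 2

theorem stmt_2 (γ : ℝ) (h0 : 0 ≤ γ) (h1 : γ ≤ 1 / 2) :
    1 - 4 * γ ^ 2 ≤ binEnt (1 / 2 - γ) ∧ binEnt (1 / 2 - γ) ≤ 1 - 2 * γ ^ 2 := by
  obtain rfl | h1 := h1.eq_or_lt
  · norm_num [binEnt]
  have ht : |2 * γ| < 1 := by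
    rw [abs_lt]
    constructor <;> linarith
  have hlog2 : 0 < log 2 := log_pos one_lt_two
  have hlog2' : log 2 < 1 := by linarith [log_two_lt_d9]
  rw [binEnt_eq_binEntropy_div_log_two, binEntropy_half_sub, le_div_iff₀ hlog2,
    div_le_iff₀ hlog2]
  constructor
  · nlinarith [entropyDeficit_le ht]
  · nlinarith [sq_le_entropyDeficit ht]
end

section
/- Let h be the binary entropy function. The function Υ(x) = (h(2x(1-x)) - h(x)) / (h(x)(1-h(x))) satisfies Υ(x) > 0 for all x in the open interval (0, 1/2); moreover there is an absolute constant θ > 0 such that Υ(x) ≥ θ on (0, 1/2). -/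
open Real

/-- Natural-log binary entropy. -/
noncomputable def Hnat (x : ℝ) : ℝ := -(x * Real.log x) - (1 - x) * Real.log (1 - x)

lemma Hnat_eq_binEntropy (x : ℝ) : Hnat x = Real.binEntropy x := by
  unfold Hnat Real.binEntropy
  rw [Real.log_inv, Real.log_inv]; ring

lemma log_one_sub_bounds {x : ℝ} (h0 : 0 ≤ x) (h1 : x ≤ 2/5) :
    Real.log (1-x) ≤ -x - x^2/2 - x^3/3 + (5/3)*x^4 ∧
      -x - x^2/2 - x^3/3 - (5/3)*x^4 ≤ Real.log (1-x) := by
  have hx : |x| < 1 := by rw [abs_of_nonneg h0]; linarith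
  have h := Real.abs_log_sub_add_sum_range_le hx 3
  rw [abs_of_nonneg h0] at h
  have hsum : (∑ i ∈ Finset.range 3, x ^ (i + 1) / (i + 1)) = x + x^2/2 + x^3/3 := by
    norm_num [Finset.sum_range_succ]
  rw [hsum] at h
  have herr : x^4/(1-x) ≤ (5/3)*x^4 := by
    rw [div_le_iff₀ (by linarith)]
    nlinarith [pow_nonneg h0 4]
  have h2 := abs_le.mp h
  constructor <;> nlinarith [h2.1, h2.2]

lemma log_one_sub_lb5 {u : ℝ} (h0 : 0 ≤ u) (h1 : u ≤ 1/2) :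
    -(u + u^2/2 + u^3/3 + u^4/4 + u^5/5) - 2*u^6 ≤ Real.log (1-u) := by
  have hx : |u| < 1 := by rw [abs_of_nonneg h0]; linarith
  have h := Real.abs_log_sub_add_sum_range_le hx 5
  rw [abs_of_nonneg h0] at h
  have hsum : (∑ i ∈ Finset.range 5, u ^ (i + 1) / (i + 1))
      = u + u^2/2 + u^3/3 + u^4/4 + u^5/5 := by
    norm_num [Finset.sum_range_succ]
  rw [hsum] at h
  have herr : u^6/(1-u) ≤ 2*u^6 := by
    rw [div_le_iff₀ (by linarith)]
    nlinarith [pow_nonneg h0 6]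
  have h2 := abs_le.mp h
  nlinarith [h2.1, h2.2]

lemma log_one_add_lb5 {u : ℝ} (h0 : 0 ≤ u) (h1 : u ≤ 1/2) :
    u - u^2/2 + u^3/3 - u^4/4 + u^5/5 - 2*u^6 ≤ Real.log (1+u) := by
  have hx : |(-u)| < 1 := by rw [abs_neg, abs_of_nonneg h0]; linarith
  have h := Real.abs_log_sub_add_sum_range_le hx 5
  rw [abs_neg, abs_of_nonneg h0] at h
  have hsum : (∑ i ∈ Finset.range 5, (-u) ^ (i + 1) / (i + 1))
      = -u + u^2/2 - u^3/3 + u^4/4 - u^5/5 := by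
    norm_num [Finset.sum_range_succ]; ring
  rw [hsum, show (1 : ℝ) - -u = 1 + u by ring] at h
  have herr : u^6/(1-u) ≤ 2*u^6 := by
    rw [div_le_iff₀ (by linarith)]
    nlinarith [pow_nonneg h0 6]
  have h2 := abs_le.mp h
  nlinarith [h2.1, h2.2]

lemma log_one_sub_ub2 {s : ℝ} (h0 : 0 ≤ s) (h1 : s ≤ 1/4) :
    Real.log (1-s) ≤ -s - s^2/2 + (4/3)*s^3 := by
  have hx : |s| < 1 := by rw [abs_of_nonneg h0]; linarith
  have h := Real.abs_log_sub_add_sum_range_le hx 2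
  rw [abs_of_nonneg h0] at h
  have hsum : (∑ i ∈ Finset.range 2, s ^ (i + 1) / (i + 1)) = s + s^2/2 := by
    norm_num [Finset.sum_range_succ]
  rw [hsum] at h
  have herr : s^3/(1-s) ≤ (4/3)*s^3 := by
    rw [div_le_iff₀ (by linarith)]
    nlinarith [pow_nonneg h0 3]
  have h2 := abs_le.mp h
  nlinarith [h2.1, h2.2]

lemma log_one_add_ub2 {s : ℝ} (h0 : 0 ≤ s) (h1 : s ≤ 1/4) :
    Real.log (1+s) ≤ s - s^2/2 + (4/3)*s^3 := by
  have hx : |(-s)| < 1 := by rw [abs_neg, abs_of_nonneg h0]; linarith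
  have h := Real.abs_log_sub_add_sum_range_le hx 2
  rw [abs_neg, abs_of_nonneg h0] at h
  have hsum : (∑ i ∈ Finset.range 2, (-s) ^ (i + 1) / (i + 1)) = -s + s^2/2 := by
    norm_num [Finset.sum_range_succ]
  rw [hsum, show (1 : ℝ) - -s = 1 + s by ring] at h
  have herr : s^3/(1-s) ≤ (4/3)*s^3 := by
    rw [div_le_iff₀ (by linarith)]
    nlinarith [pow_nonneg h0 3]
  have h2 := abs_le.mp h
  nlinarith [h2.1, h2.2]

lemma g_lb {u : ℝ} (h0 : 0 ≤ u) (h1 : u ≤ 1/2) :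
    0.8*u^2 ≤ (1-u)*Real.log (1-u) + (1+u)*Real.log (1+u) := by
  have hm := log_one_sub_lb5 h0 h1
  have hp := log_one_add_lb5 h0 h1
  have c1 : (1-u) * (-(u + u^2/2 + u^3/3 + u^4/4 + u^5/5) - 2*u^6) ≤ (1-u)*Real.log (1-u) :=
    mul_le_mul_of_nonneg_left hm (by linarith)
  have c2 : (1+u) * (u - u^2/2 + u^3/3 - u^4/4 + u^5/5 - 2*u^6) ≤ (1+u)*Real.log (1+u) :=
    mul_le_mul_of_nonneg_left hp (by linarith)
  have hsq : u^2 ≤ 1/4 := by nlinarith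
  have h4 : u^4 ≤ u^2/4 := by
    nlinarith [mul_nonneg (sq_nonneg u) (show (0:ℝ) ≤ 1/4 - u^2 by linarith)]
  have h6 : u^6 ≤ u^4/4 := by
    nlinarith [mul_nonneg (pow_nonneg h0 4) (show (0:ℝ) ≤ 1/4 - u^2 by linarith)]
  nlinarith [c1, c2, h4, h6]

lemma g_ub {s : ℝ} (h0 : 0 ≤ s) (h1 : s ≤ 1/4) :
    (1-s)*Real.log (1-s) + (1+s)*Real.log (1+s) ≤ s^2 + (8/3)*s^3 := by
  have hm := log_one_sub_ub2 h0 h1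
  have hp := log_one_add_ub2 h0 h1
  have c1 : (1-s)*Real.log (1-s) ≤ (1-s) * (-s - s^2/2 + (4/3)*s^3) :=
    mul_le_mul_of_nonneg_left hm (by linarith)
  have c2 : (1+s)*Real.log (1+s) ≤ (1+s) * (s - s^2/2 + (4/3)*s^3) :=
    mul_le_mul_of_nonneg_left hp (by linarith)
  nlinarith [c1, c2]

lemma Hnat_half {u : ℝ} (hm : -1 < u) (hp : u < 1) :
    Hnat ((1-u)/2)
      = Real.log 2 - ((1-u)*Real.log (1-u) + (1+u)*Real.log (1+u))/2 := by
  unfold Hnat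
  rw [show (1:ℝ) - (1-u)/2 = (1+u)/2 by ring,
    Real.log_div (by linarith) two_ne_zero, Real.log_div (by linarith) two_ne_zero]
  ring

set_option maxHeartbeats 1000000 in
lemma keyB {x : ℝ} (h1 : 1/4 ≤ x) (h2 : x < 1/2) :
    0.05 * (Hnat x * (Real.log 2 - Hnat x)) ≤ Real.log 2 * (Hnat (2*x*(1-x)) - Hnat x) := by
  obtain ⟨u, hu⟩ : ∃ u : ℝ, u = 1 - 2*x := ⟨_, rfl⟩
  have hu0 : 0 < u := by rw [hu]; linarith
  have hu1 : u ≤ 1/2 := by rw [hu]; linarith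
  have hsq : u^2 ≤ 1/4 := by nlinarith
  have hx0 : 0 ≤ Hnat x := by
    rw [Hnat_eq_binEntropy]; exact Real.binEntropy_nonneg (by linarith) (by linarith)
  have hxl : Hnat x ≤ Real.log 2 := by
    rw [Hnat_eq_binEntropy]; exact Real.binEntropy_le_log_two
  have i1 : Hnat x = Real.log 2 - ((1-u)*Real.log (1-u) + (1+u)*Real.log (1+u))/2 := by
    rw [show x = (1-u)/2 by rw [hu]; ring]
    exact Hnat_half (by linarith) (by linarith)
  have i2 : Hnat (2*x*(1-x))
      = Real.log 2 - ((1-u^2)*Real.log (1-u^2) + (1+u^2)*Real.log (1+u^2))/2 := by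
    rw [show 2*x*(1-x) = (1-u^2)/2 by rw [hu]; ring]
    exact Hnat_half (lt_of_lt_of_le (by norm_num) (sq_nonneg u)) (by linarith)
  have hga := g_lb hu0.le hu1
  have hgb := g_ub (sq_nonneg u) hsq
  set a : ℝ := (1-u)*Real.log (1-u) + (1+u)*Real.log (1+u) with ha
  set b : ℝ := (1-u^2)*Real.log (1-u^2) + (1+u^2)*Real.log (1+u^2) with hb
  have ha0 : 0 ≤ a := by nlinarith [sq_nonneg u]
  have hb' : b ≤ (25/48)*a := by
    have h4 : u^4 ≤ u^2/4 := by
      nlinarith [mul_nonneg (sq_nonneg u) (show (0:ℝ) ≤ 1/4 - u^2 by linarith)]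
    have h6 : u^6 ≤ u^4/4 := by
      nlinarith [mul_nonneg (pow_nonneg hu0.le 4) (show (0:ℝ) ≤ 1/4 - u^2 by linarith)]
    nlinarith [hgb, hga, h4, h6]
  have hl : 0 < Real.log 2 := Real.log_pos one_lt_two
  rw [i1, i2]
  rw [i1] at hx0 hxl
  nlinarith [mul_nonneg hl.le ha0, mul_le_mul_of_nonneg_left hb' hl.le,
    mul_nonneg hx0 ha0, mul_le_mul_of_nonneg_right hxl ha0]

lemma Hnat_conv {x : ℝ} (hx0 : 0 < x) (hx1 : x < 1) :
    Hnat (2*x*(1-x)) = 2*(1-x)*(-(x*Real.log x)) - (2*x*(1-x))*(Real.log 2 + Real.log (1-x))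
      - (1-2*x*(1-x))*Real.log (1-2*x*(1-x)) := by
  have h1x : (1:ℝ) - x ≠ 0 := by intro h; nlinarith [h]
  have hlog : Real.log (2*x*(1-x)) = Real.log 2 + Real.log x + Real.log (1-x) := by
    rw [Real.log_mul (mul_ne_zero two_ne_zero hx0.ne') h1x,
      Real.log_mul two_ne_zero hx0.ne']
  unfold Hnat
  rw [hlog]; ring

lemma polyG1 {x : ℝ} (h0 : 0 ≤ x) (h1 : x ≤ 27/200) :
    0 ≤ (114352003/78125000) + (-39928766/9765625)*x + (221/120)*x^2 + (-476/15)*x^3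
      + (727/4)*x^4 + (-1382/3)*x^5 + (1984/3)*x^6 + (-1696/3)*x^7 + (800/3)*x^8
      + (-160/3)*x^9 := by
  nlinarith [mul_nonneg h0 h0, mul_nonneg (mul_nonneg h0 h0) h0,
    mul_nonneg (sub_nonneg.2 h1) (pow_nonneg h0 2),
    mul_nonneg (sub_nonneg.2 h1) (pow_nonneg h0 3),
    mul_nonneg (sub_nonneg.2 h1) (pow_nonneg h0 4),
    mul_nonneg (sub_nonneg.2 h1) (pow_nonneg h0 5),
    mul_nonneg (sub_nonneg.2 h1) (pow_nonneg h0 6),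
    mul_nonneg (sub_nonneg.2 h1) (pow_nonneg h0 7),
    mul_nonneg (sub_nonneg.2 h1) (pow_nonneg h0 8),
    pow_nonneg h0 4, pow_nonneg h0 6, pow_nonneg h0 8]

lemma polyG2 {x : ℝ} (h0 : 27/200 ≤ x) (h1 : x ≤ 1/4) :
    0 ≤ (88068528097/100000000000) + (-7153235899/2500000000)*x + (221/120)*x^2
      + (-476/15)*x^3 + (727/4)*x^4 + (-1382/3)*x^5 + (1984/3)*x^6 + (-1696/3)*x^7
      + (800/3)*x^8 + (-160/3)*x^9 := by
  have hx0 : (0:ℝ) ≤ x := by linarith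
  nlinarith [mul_nonneg (sub_nonneg.2 h0) (sub_nonneg.2 h1),
    mul_nonneg (mul_nonneg (sub_nonneg.2 h0) (sub_nonneg.2 h1)) (pow_nonneg hx0 2),
    mul_nonneg (mul_nonneg (sub_nonneg.2 h0) (sub_nonneg.2 h1)) (pow_nonneg hx0 4),
    mul_nonneg (mul_nonneg (sub_nonneg.2 h0) (sub_nonneg.2 h1)) (pow_nonneg hx0 6),
    mul_nonneg (sub_nonneg.2 h1) (pow_nonneg hx0 7),
    mul_nonneg (sub_nonneg.2 h1) (pow_nonneg hx0 8),
    pow_nonneg hx0 4, pow_nonneg hx0 6, pow_nonneg hx0 8]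

set_option maxHeartbeats 2000000 in
lemma keyA {x : ℝ} (hx0 : 0 < x) (hx2 : x ≤ 1/4) :
    0.05 * (Hnat x * (Real.log 2 - Hnat x)) ≤ Real.log 2 * (Hnat (2*x*(1-x)) - Hnat x) := by
  have hx1 : x < 1 := by linarith
  have hl : 0 < Real.log 2 := Real.log_pos one_lt_two
  have hx0' : 0 ≤ Hnat x := by
    rw [Hnat_eq_binEntropy]; exact Real.binEntropy_nonneg (by linarith) (by linarith)
  have step : 1.05 * Hnat x ≤ Hnat (2*x*(1-x)) := by
    have hb := log_one_sub_bounds hx0.le (by linarith : x ≤ 2/5)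
    have ht0 : (0:ℝ) ≤ 2*x*(1-x) := by nlinarith
    have ht4 : 2*x*(1-x) ≤ 2/5 := by nlinarith
    have hbt := (log_one_sub_bounds ht0 ht4).1
    have hco : (0:ℝ) ≤ (1-x)*(1.05-2*x) := by nlinarith
    have P2 : ((1-x)*(1.05-2*x)) * (-x - x^2/2 - x^3/3 - (5/3)*x^4)
        ≤ ((1-x)*(1.05-2*x)) * Real.log (1-x) :=
      mul_le_mul_of_nonneg_left hb.2 hco
    have P3 : (1-2*x*(1-x)) * Real.log (1-2*x*(1-x))
        ≤ (1-2*x*(1-x)) * (-(2*x*(1-x)) - (2*x*(1-x))^2/2 - (2*x*(1-x))^3/3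
            + (5/3)*(2*x*(1-x))^4) :=
      mul_le_mul_of_nonneg_left hbt (by nlinarith [sq_nonneg (1-2*x)])
    have P4 : (2*x*(1-x)) * Real.log 2 ≤ (2*x*(1-x)) * 0.6931471808 :=
      mul_le_mul_of_nonneg_left (le_of_lt Real.log_two_lt_d9) ht0
    rw [Hnat_conv hx0 hx1]
    unfold Hnat
    rcases le_or_gt x (27/200) with hc | hc
    · -- small x : -log x ≥ 2
      have he2 : Real.exp 2 < 7.4 := by
        have h9 := Real.exp_one_lt_d9
        have he : Real.exp 2 = Real.exp 1 * Real.exp 1 := by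
          rw [← Real.exp_add]; norm_num
        nlinarith [Real.exp_pos 1]
      have h135 : (27/200 : ℝ) ≤ Real.exp (-2) := by
        have hid : Real.exp (-2) * Real.exp 2 = 1 := by
          rw [← Real.exp_add]; norm_num
        nlinarith [Real.exp_pos (-2), Real.exp_pos 2]
      have hKx : Real.log x ≤ -2 := by
        rw [Real.log_le_iff_le_exp hx0]; exact le_trans hc h135
      have hA : 2*x ≤ -(x*Real.log x) := by
        nlinarith [mul_nonneg hx0.le (show (0:ℝ) ≤ -Real.log x - 2 by linarith)]
      have P1 : (0.95-2*x) * (2*x) ≤ (0.95-2*x) * (-(x*Real.log x)) :=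
        mul_le_mul_of_nonneg_left hA (by linarith)
      have hpoly := mul_nonneg hx0.le (polyG1 hx0.le hc)
      linarith [P1, P2, P3, P4, hpoly]
    · -- larger x : -log x ≥ 2 log 2
      have hKx : Real.log x ≤ -(2*Real.log 2) := by
        have hlog : Real.log x ≤ Real.log (1/4) := Real.log_le_log hx0 hx2
        have h4 : Real.log (1/4 : ℝ) = -(2*Real.log 2) := by
          rw [show (1/4:ℝ) = ((2:ℝ)^2)⁻¹ by norm_num, Real.log_inv, Real.log_pow]
          push_cast; ring
        linarith [hlog, h4.le]
      have hA : 1.3862943606*x ≤ -(x*Real.log x) := by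
        nlinarith [mul_nonneg hx0.le
          (show (0:ℝ) ≤ -Real.log x - 1.3862943606 by nlinarith [Real.log_two_gt_d9])]
      have P1 : (0.95-2*x) * (1.3862943606*x) ≤ (0.95-2*x) * (-(x*Real.log x)) :=
        mul_le_mul_of_nonneg_left hA (by linarith)
      have hpoly := mul_nonneg (show (0:ℝ) ≤ x by linarith) (polyG2 hc.le hx2)
      linarith [P1, P2, P3, P4, hpoly]
  nlinarith [mul_nonneg hl.le
      (by linarith [step] : (0:ℝ) ≤ Hnat (2*x*(1-x)) - Hnat x - 0.05*Hnat x),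
    sq_nonneg (Hnat x)]

noncomputable def Upsilon (x : ℝ) : ℝ :=
  (binEnt (2 * x * (1 - x)) - binEnt x) / (binEnt x * (1 - binEnt x))

lemma binEnt_eq (y : ℝ) : binEnt y = Hnat y / Real.log 2 := by
  unfold binEnt Hnat Real.logb; ring

theorem stmt_3 :
    (∀ x ∈ Set.Ioo (0 : ℝ) (1 / 2), 0 < Upsilon x) ∧
      ∃ θ : ℝ, 0 < θ ∧ ∀ x ∈ Set.Ioo (0 : ℝ) (1 / 2), θ ≤ Upsilon x := by
  have key : ∀ x ∈ Set.Ioo (0 : ℝ) (1 / 2), (0.05 : ℝ) ≤ Upsilon x := by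
    rintro x ⟨hx0, hx2⟩
    have hl : 0 < Real.log 2 := Real.log_pos one_lt_two
    have hb0 : 0 < Hnat x := by
      rw [Hnat_eq_binEntropy]; exact Real.binEntropy_pos hx0 (by linarith)
    have hb1 : Hnat x < Real.log 2 := by
      rw [Hnat_eq_binEntropy]
      refine Real.binEntropy_lt_log_two.2 ?_
      intro h; rw [h] at hx2; norm_num at hx2
    have main : 0.05 * (Hnat x * (Real.log 2 - Hnat x))
        ≤ Real.log 2 * (Hnat (2*x*(1-x)) - Hnat x) := by
      rcases le_or_gt x (1/4) with h | h
      · exact keyA hx0 h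
      · exact keyB h.le hx2
    unfold Upsilon
    rw [binEnt_eq, binEnt_eq]
    have hD : 0 < (Hnat x / Real.log 2) * (1 - Hnat x / Real.log 2) :=
      mul_pos (div_pos hb0 hl) (sub_pos.2 ((div_lt_one hl).2 hb1))
    rw [le_div_iff₀ hD]
    have heq : (Hnat (2*x*(1-x)) / Real.log 2 - Hnat x / Real.log 2)
        - 0.05 * ((Hnat x / Real.log 2) * (1 - Hnat x / Real.log 2))
        = (Real.log 2 * (Hnat (2*x*(1-x)) - Hnat x)
            - 0.05 * (Hnat x * (Real.log 2 - Hnat x))) / (Real.log 2)^2 := by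
      field_simp
    have h2 : 0 ≤ (Real.log 2 * (Hnat (2*x*(1-x)) - Hnat x)
        - 0.05 * (Hnat x * (Real.log 2 - Hnat x))) / (Real.log 2)^2 :=
      div_nonneg (by linarith [main]) (by positivity)
    have := heq ▸ h2
    have hxx : 2 * x * (1 - x) = 2*x*(1-x) := rfl
    linarith [this]
  refine ⟨fun x hx => lt_of_lt_of_le (by norm_num) (key x hx), ⟨0.05, by norm_num, key⟩⟩
end

section
/- Let z ∈ (0,1) and define the recursion on finite binary strings: Z(empty) = z, Z(s·1) = Z(s)², Z(s·0) = 2·Z(s). Then for any value obtained from z by a doublings and b squarings in any order (i.e. Z(i) for any string i with a zeros and b ones), the resulting value is at most the value obtained by performing all a doublings first and then all b squarings, i.e. at most (2^a·z)^{2^b}, provided 2^a·z ≤ 1. -/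
private lemma aux_stmt_10 : ∀ (l : List Bool) (z : ℝ), 0 < z →
    2 ^ l.count false * z ≤ 1 →
    l.foldl (fun x b => if b then x ^ 2 else 2 * x) z ≤
      (2 ^ l.count false * z) ^ 2 ^ l.count true := by
  intro l
  induction l with
  | nil => intro z hz0 hle; simp
  | cons b t IH =>
    intro z hz0 hle
    have ha1 : (1 : ℝ) ≤ 2 ^ t.count false := one_le_pow₀ (by norm_num)
    cases b with
    | true =>
      simp only [List.count_cons] at hle ⊢
      norm_num at hle ⊢
      have hz1 : z ≤ 1 := by nlinarith
      have hle' : 2 ^ t.count false * z ^ 2 ≤ 1 := by nlinarith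
      have h := IH (z ^ 2) (by positivity) hle'
      calc List.foldl (fun x b => if b = true then x ^ 2 else 2 * x) (z ^ 2) t
          ≤ (2 ^ t.count false * z ^ 2) ^ 2 ^ t.count true := h
        _ ≤ ((2 ^ t.count false * z) ^ 2) ^ 2 ^ t.count true := by
            apply pow_le_pow_left₀ (by positivity)
            nlinarith
        _ = (2 ^ t.count false * z) ^ 2 ^ (t.count true + 1) := by
            rw [← pow_mul, pow_succ, Nat.mul_comm]
    | false =>
      simp only [List.count_cons] at hle ⊢
      norm_num at hle ⊢
      have key : (2 : ℝ) ^ (t.count false + 1) * z = 2 ^ t.count false * (2 * z) := by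
        rw [pow_succ]; ring
      have hle' : 2 ^ t.count false * (2 * z) ≤ 1 := by rw [← key]; exact hle
      have h := IH (2 * z) (by positivity) hle'
      rw [key]
      exact h

theorem stmt_10 (z : ℝ) (hz0 : 0 < z) (hz1 : z < 1) (l : List Bool)
    (hle : 2 ^ l.count false * z ≤ 1) :
    l.foldl (fun x b => if b then x ^ 2 else 2 * x) z ≤
      (2 ^ l.count false * z) ^ 2 ^ l.count true := by
  exact aux_stmt_10 l z hz0 hle
end

section
/- Let W : B → Y be a binary-input channel on a finite output alphabet Y with transition probabilities W(y|x), x ∈ {0,1}, and let Z(W) = Σ_{y∈Y} √(W(y|0)·W(y|1)). Define W⁺ : B → Y×Y×B by W⁺(y₁,y₂,x₁ | x₂) = (1/2)·W(y₁|x₁⊕x₂)·W(y₂|x₂). Then Z(W⁺) = Z(W)². -/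
theorem stmt_13 {Y : Type*} [Fintype Y] (W : Y → Bool → ℝ)
    (hW : ∀ y x, 0 ≤ W y x) :
    ∑ y₁, ∑ y₂, ∑ x₁ : Bool,
      Real.sqrt ((1 / 2 * W y₁ (xor x₁ false) * W y₂ false) *
        (1 / 2 * W y₁ (xor x₁ true) * W y₂ true)) =
      (∑ y, Real.sqrt (W y false * W y true)) ^ 2 := by
  have key : ∀ y₁ y₂ : Y, ∑ x₁ : Bool,
      Real.sqrt ((1 / 2 * W y₁ (xor x₁ false) * W y₂ false) *
        (1 / 2 * W y₁ (xor x₁ true) * W y₂ true)) =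
      Real.sqrt (W y₁ false * W y₁ true) * Real.sqrt (W y₂ false * W y₂ true) := by
    intro y₁ y₂
    rw [Fintype.sum_bool]
    have h1 : ∀ a b : ℝ, 0 ≤ a → 0 ≤ b →
        Real.sqrt ((1 / 2 * a * W y₂ false) * (1 / 2 * b * W y₂ true)) =
        1 / 2 * (Real.sqrt (a * b) * Real.sqrt (W y₂ false * W y₂ true)) := by
      intro a b ha hb
      rw [show (1 / 2 * a * W y₂ false) * (1 / 2 * b * W y₂ true)
          = (1/2)^2 * ((a * b) * (W y₂ false * W y₂ true)) by ring,
        Real.sqrt_mul (by positivity), Real.sqrt_sq (by norm_num),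
        Real.sqrt_mul (by positivity)]
    simp only [Bool.xor_false, Bool.xor_true, Bool.not_true, Bool.not_false]
    rw [h1 _ _ (hW _ _) (hW _ _), h1 _ _ (hW _ _) (hW _ _), mul_comm (W y₁ false)]
    ring
  simp only [key, ← Finset.sum_mul, ← Finset.mul_sum, sq]
end

section
/- Let W : B → Y be a binary-input channel on a finite output alphabet with Z(W) = Σ_y √(W(y|0)W(y|1)). Define W⁻ : B → Y×Y by W⁻(y₁,y₂ | x₁) = (1/2)·Σ_{x₂∈{0,1}} W(y₁|x₁⊕x₂)·W(y₂|x₂). Then Z(W⁻) ≤ 2·Z(W) - Z(W)². -/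
lemma key_ineq (a b c d : ℝ) (ha : 0 ≤ a) (hb : 0 ≤ b) (hc : 0 ≤ c) (hd : 0 ≤ d) :
    Real.sqrt ((a * c + b * d) * (b * c + a * d)) ≤
      Real.sqrt (a * b) * (c + d) + Real.sqrt (c * d) * (a + b) -
        2 * (Real.sqrt (a * b) * Real.sqrt (c * d)) := by
  obtain ⟨p, hp, rfl⟩ : ∃ p, 0 ≤ p ∧ a = p ^ 2 :=
    ⟨Real.sqrt a, Real.sqrt_nonneg a, (Real.sq_sqrt ha).symm⟩
  obtain ⟨q, hq, rfl⟩ : ∃ q, 0 ≤ q ∧ b = q ^ 2 :=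
    ⟨Real.sqrt b, Real.sqrt_nonneg b, (Real.sq_sqrt hb).symm⟩
  obtain ⟨r, hr, rfl⟩ : ∃ r, 0 ≤ r ∧ c = r ^ 2 :=
    ⟨Real.sqrt c, Real.sqrt_nonneg c, (Real.sq_sqrt hc).symm⟩
  obtain ⟨s, hs, rfl⟩ : ∃ s, 0 ≤ s ∧ d = s ^ 2 :=
    ⟨Real.sqrt d, Real.sqrt_nonneg d, (Real.sq_sqrt hd).symm⟩
  rw [show p ^ 2 * q ^ 2 = (p * q) ^ 2 by ring, show r ^ 2 * s ^ 2 = (r * s) ^ 2 by ring,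
    Real.sqrt_sq (by positivity), Real.sqrt_sq (by positivity)]
  set R : ℝ := p * q * (r ^ 2 + s ^ 2) + r * s * (p ^ 2 + q ^ 2) - 2 * (p * q * (r * s)) with hR
  have hRnn : 0 ≤ R := by
    nlinarith [mul_nonneg (mul_nonneg hp hq) (sq_nonneg (r - s)),
      mul_nonneg (mul_nonneg hr hs) (add_nonneg (sq_nonneg p) (sq_nonneg q))]
  have hkey : (p ^ 2 * r ^ 2 + q ^ 2 * s ^ 2) * (q ^ 2 * r ^ 2 + p ^ 2 * s ^ 2) ≤ R ^ 2 := by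
    have hid : R ^ 2 - (p ^ 2 * r ^ 2 + q ^ 2 * s ^ 2) * (q ^ 2 * r ^ 2 + p ^ 2 * s ^ 2)
        = 2 * (p * q * (r * s)) * ((p - q) ^ 2 * (r - s) ^ 2) := by rw [hR]; ring
    nlinarith [mul_nonneg (mul_nonneg (mul_nonneg (mul_nonneg hp hq) hr) hs)
      (mul_nonneg (sq_nonneg (p - q)) (sq_nonneg (r - s)))]
  calc Real.sqrt ((p ^ 2 * r ^ 2 + q ^ 2 * s ^ 2) * (q ^ 2 * r ^ 2 + p ^ 2 * s ^ 2))
      ≤ Real.sqrt (R ^ 2) := Real.sqrt_le_sqrt hkey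
    _ = R := Real.sqrt_sq hRnn
    _ = p * q * (r ^ 2 + s ^ 2) + r * s * (p ^ 2 + q ^ 2) - 2 * (p * q * (r * s)) := hR

theorem stmt_14 {Y : Type*} [Fintype Y] (W : Y → Bool → ℝ)
    (hW : ∀ y x, 0 ≤ W y x) (hsum : ∀ x, ∑ y, W y x = 1) :
    ∑ y₁, ∑ y₂,
      Real.sqrt ((1 / 2 * ∑ x₂ : Bool, W y₁ (xor false x₂) * W y₂ x₂) *
        (1 / 2 * ∑ x₂ : Bool, W y₁ (xor true x₂) * W y₂ x₂)) ≤
      2 * (∑ y, Real.sqrt (W y false * W y true)) -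
        (∑ y, Real.sqrt (W y false * W y true)) ^ 2 := by
  set Z := ∑ y, Real.sqrt (W y false * W y true) with hZ
  set S : Y → ℝ := fun y => Real.sqrt (W y false * W y true) with hS
  have hterm : ∀ y₁ y₂ : Y,
      Real.sqrt ((1 / 2 * ∑ x₂ : Bool, W y₁ (xor false x₂) * W y₂ x₂) *
        (1 / 2 * ∑ x₂ : Bool, W y₁ (xor true x₂) * W y₂ x₂)) ≤
      1 / 2 * (S y₁ * (W y₂ false + W y₂ true)) +
        1 / 2 * (S y₂ * (W y₁ false + W y₁ true)) - S y₁ * S y₂ := by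
    intro y₁ y₂
    have h1 : (1 / 2 * ∑ x₂ : Bool, W y₁ (xor false x₂) * W y₂ x₂) *
        (1 / 2 * ∑ x₂ : Bool, W y₁ (xor true x₂) * W y₂ x₂)
        = (1 / 2) ^ 2 * ((W y₁ false * W y₂ false + W y₁ true * W y₂ true) *
            (W y₁ true * W y₂ false + W y₁ false * W y₂ true)) := by
      simp [Fintype.sum_bool]; ring
    rw [h1, Real.sqrt_mul (by positivity), Real.sqrt_sq (by norm_num)]
    have := key_ineq (W y₁ false) (W y₁ true) (W y₂ false) (W y₂ true)
      (hW _ _) (hW _ _) (hW _ _) (hW _ _)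
    have h2 := mul_le_mul_of_nonneg_left this (by norm_num : (0:ℝ) ≤ 1 / 2)
    calc (1:ℝ) / 2 * Real.sqrt ((W y₁ false * W y₂ false + W y₁ true * W y₂ true) *
            (W y₁ true * W y₂ false + W y₁ false * W y₂ true)) ≤ _ := h2
      _ = 1 / 2 * (S y₁ * (W y₂ false + W y₂ true)) +
          1 / 2 * (S y₂ * (W y₁ false + W y₁ true)) - S y₁ * S y₂ := by
        simp only [hS]; ring
  calc ∑ y₁, ∑ y₂, Real.sqrt ((1 / 2 * ∑ x₂ : Bool, W y₁ (xor false x₂) * W y₂ x₂) *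
        (1 / 2 * ∑ x₂ : Bool, W y₁ (xor true x₂) * W y₂ x₂))
      ≤ ∑ y₁, ∑ y₂, (1 / 2 * (S y₁ * (W y₂ false + W y₂ true)) +
          1 / 2 * (S y₂ * (W y₁ false + W y₁ true)) - S y₁ * S y₂) :=
        Finset.sum_le_sum fun y₁ _ => Finset.sum_le_sum fun y₂ _ => hterm y₁ y₂
    _ = 2 * Z - Z ^ 2 := by
        simp only [Finset.sum_sub_distrib, Finset.sum_add_distrib, ← Finset.mul_sum,
          ← Finset.sum_mul]
        have e1 : ∑ y : Y, (W y false + W y true) = 2 := by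
          rw [Finset.sum_add_distrib, hsum, hsum]; norm_num
        have e2' : ∀ y₁ : Y, ∑ y₂ : Y, (S y₁ * (W y₂ false + W y₂ true))
            = S y₁ * 2 := by intro y₁; rw [← Finset.mul_sum, e1]
        have e3 : ∀ y₁ : Y, ∑ y₂ : Y, (S y₂ * (W y₁ false + W y₁ true))
            = Z * (W y₁ false + W y₁ true) := by
          intro y₁; rw [← Finset.sum_mul]
        have e4 : ∀ y₁ : Y, ∑ y₂ : Y, S y₁ * S y₂ = S y₁ * Z := by
          intro y₁; rw [← Finset.mul_sum]
        rw [hsum, hsum, ← hZ]; ring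
end

section
/- Define the binary erasure channel recursion: z⁺ = z² and z⁻ = 2z - z², and let Y(z) = z(1-z). Then Y(z⁺) = Y(z)·z(1+z) and Y(z⁻) = Y(z)·(1-z)(2-z), and consequently √(Y(z⁺)) + √(Y(z⁻)) ≤ √3·√(Y(z)) for all z ∈ [0,1]. -/
theorem stmt_15 (z : ℝ) (h0 : 0 ≤ z) (h1 : z ≤ 1) :
    z ^ 2 * (1 - z ^ 2) = z * (1 - z) * (z * (1 + z)) ∧
    (2 * z - z ^ 2) * (1 - (2 * z - z ^ 2)) = z * (1 - z) * ((1 - z) * (2 - z)) ∧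
    Real.sqrt (z ^ 2 * (1 - z ^ 2)) + Real.sqrt ((2 * z - z ^ 2) * (1 - (2 * z - z ^ 2))) ≤
      Real.sqrt 3 * Real.sqrt (z * (1 - z)) := by
  have hY : (0:ℝ) ≤ z * (1 - z) := by nlinarith
  refine ⟨by ring, by ring, ?_⟩
  have e1 : z ^ 2 * (1 - z ^ 2) = z * (1 - z) * (z * (1 + z)) := by ring
  have e2 : (2 * z - z ^ 2) * (1 - (2 * z - z ^ 2)) = z * (1 - z) * ((1 - z) * (2 - z)) := by
    ring
  rw [e1, e2, Real.sqrt_mul hY, Real.sqrt_mul hY, ← mul_add, mul_comm (Real.sqrt 3)]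
  apply mul_le_mul_of_nonneg_left _ (Real.sqrt_nonneg _)
  -- goal: sqrt (z*(1+z)) + sqrt ((1-z)*(2-z)) ≤ sqrt 3
  have ha0 : (0:ℝ) ≤ z * (1 + z) := by nlinarith
  have hb0 : (0:ℝ) ≤ (1 - z) * (2 - z) := by nlinarith
  have ha := Real.sq_sqrt ha0
  have hb := Real.sq_sqrt hb0
  have hab : Real.sqrt (z * (1 + z)) * Real.sqrt ((1 - z) * (2 - z))
      = Real.sqrt (z * (1 + z) * ((1 - z) * (2 - z))) := (Real.sqrt_mul ha0 _).symm
  have hc : (0:ℝ) ≤ (1 + 2 * z - 2 * z ^ 2) / 2 := by nlinarith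
  have key : Real.sqrt (z * (1 + z) * ((1 - z) * (2 - z))) ≤ (1 + 2 * z - 2 * z ^ 2) / 2 := by
    have h := Real.sqrt_le_sqrt (show z * (1 + z) * ((1 - z) * (2 - z))
        ≤ ((1 + 2 * z - 2 * z ^ 2) / 2) ^ 2 by nlinarith [sq_nonneg (1 - 2 * z)])
    rwa [Real.sqrt_sq hc] at h
  have h3 : Real.sqrt 3 ^ 2 = 3 := Real.sq_sqrt (by norm_num)
  nlinarith [Real.sqrt_nonneg (z * (1 + z)), Real.sqrt_nonneg ((1 - z) * (2 - z)),
    Real.sqrt_nonneg (3:ℝ),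
    sq_nonneg (Real.sqrt (z * (1 + z)) + Real.sqrt ((1 - z) * (2 - z)) - Real.sqrt 3)]
end
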